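/- arXiv:1802.08171 — 15 statements merged into one kernel-verified Lean document; each statement's English description precedes it below -/
import Mathlib

section
/- Let (λ_k)_{k≥0} be a family of scalars in a field K of characteristic zero, and define a bilinear product ∙ on K[X] by X^i ∙ X^j = i·λ_j·X^{i+j}. Then (K[X], multiplication, ∙) satisfies the right preLie identity (a∙b)∙c − a∙(b∙c) = (a∙c)∙b − a∙(c∙b) if and only if for all j,k ≥ 1: (j·λ_k − k·λ_j)·λ_{j+k} = (j−k)·λ_j·λ_k. -/
open Polynomial

theorem stmt_0 (K : Type*) [Field K] [CharZero K] (lam : ℕ → K)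
    (B : K[X] →ₗ[K] K[X] →ₗ[K] K[X])
    (hB : ∀ i j : ℕ, B (X ^ i) (X ^ j) = ((i : K) * lam j) • X ^ (i + j)) :
    (∀ a b c : K[X], B (B a b) c - B a (B b c) = B (B a c) b - B a (B c b)) ↔
      (∀ j k : ℕ, 1 ≤ j → 1 ≤ k →
        ((j : K) * lam k - (k : K) * lam j) * lam (j + k)
          = ((j : K) - (k : K)) * lam j * lam k) := by
  constructor
  · intro h j k hj hk
    have key := h (X ^ 1) (X ^ j) (X ^ k)
    simp only [hB, map_smul, LinearMap.smul_apply, hB, smul_smul] at key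
    have hc := congrArg (fun p => Polynomial.coeff p (1 + j + k)) key
    simp only [Polynomial.coeff_sub, Polynomial.coeff_smul, Polynomial.coeff_X_pow,
      smul_eq_mul] at hc
    rw [if_pos trivial, if_pos (by ring), if_pos (by ring), if_pos (by ring)] at hc
    push_cast at hc
    rw [Nat.add_comm k j] at hc
    linear_combination -hc
  · intro h
    have key : ∀ i j k : ℕ, B (B (X ^ i) (X ^ j)) (X ^ k) - B (X ^ i) (B (X ^ j) (X ^ k))
        = B (B (X ^ i) (X ^ k)) (X ^ j) - B (X ^ i) (B (X ^ k) (X ^ j)) := by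
      intro i j k
      simp only [hB, map_smul, LinearMap.smul_apply, hB, smul_smul]
      rw [show i + j + k = i + k + j by ring, show i + (j + k) = i + k + j by ring,
        show i + (k + j) = i + k + j by ring]
      rw [← sub_smul, ← sub_smul]
      congr 1
      rcases Nat.eq_zero_or_pos j with hj | hj
      · subst hj; push_cast; ring
      rcases Nat.eq_zero_or_pos k with hk | hk
      · subst hk; push_cast; ring
      have hjk := h j k hj hk
      rw [Nat.add_comm k j]
      push_cast
      linear_combination -(i : K) * hjk
    intro a b c
    induction a using Polynomial.induction_on' with
    | add p q hp hq =>
      simp only [map_add, LinearMap.add_apply]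
      linear_combination hp + hq
    | monomial n r =>
      induction b using Polynomial.induction_on' with
      | add p q hp hq =>
        simp only [map_add, LinearMap.add_apply]
        linear_combination hp + hq
      | monomial m s =>
        induction c using Polynomial.induction_on' with
        | add p q hp hq =>
          simp only [map_add, LinearMap.add_apply]
          linear_combination hp + hq
        | monomial p t =>
          simp only [← C_mul_X_pow_eq_monomial, ← smul_eq_C_mul, map_smul,
            LinearMap.smul_apply, smul_smul, mul_assoc]
          rw [← smul_sub, ← smul_sub, key n m p]
          congr 1
          ring
end

section
/- For all nonnegative integers m and n with m ≥ 1: m · (∑_{k=0}^{n} C(n,k) · k! · (n−k+m−1)!) = (m+n)!, where C(n,k) denotes the binomial coefficient. -/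
lemma hockey (p n : ℕ) :
    ∑ j ∈ Finset.range (n + 1), (j + p).choose p = (n + p + 1).choose (p + 1) := by
  induction n with
  | zero => simp
  | succ n ih =>
      rw [Finset.sum_range_succ, ih]
      have h : n + 1 + p = n + p + 1 := by omega
      rw [h]
      conv_rhs => rw [Nat.choose_succ_succ]
      simp only [Nat.succ_eq_add_one]
      omega

theorem stmt_1 (m n : ℕ) (hm : 1 ≤ m) :
    m * ∑ k ∈ Finset.range (n + 1),
        n.choose k * k.factorial * (n - k + m - 1).factorial
      = (m + n).factorial := by
  obtain ⟨p, rfl⟩ := Nat.exists_eq_add_of_le hm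
  have hterm : ∀ k ∈ Finset.range (n + 1),
      n.choose k * k.factorial * (n - k + (1 + p) - 1).factorial
        = n.factorial * (p.factorial * (n - k + p).choose p) := by
    intro k hk
    have hk' : k ≤ n := Nat.lt_succ_iff.mp (Finset.mem_range.mp hk)
    have h1 : n - k + (1 + p) - 1 = n - k + p := by omega
    have h2 : (n - k + p).choose p * p.factorial * (n - k).factorial
        = (n - k + p).factorial := by
      have := Nat.choose_mul_factorial_mul_factorial (Nat.le_add_left p (n - k))
      simpa using this
    have h3 : n.choose k * k.factorial * (n - k).factorial = n.factorial :=
      Nat.choose_mul_factorial_mul_factorial hk'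
    rw [h1, ← h2, ← h3]
    ring
  rw [Finset.sum_congr rfl hterm, ← Finset.mul_sum, ← Finset.mul_sum]
  have hrefl : ∑ k ∈ Finset.range (n + 1), (n - k + p).choose p
      = ∑ j ∈ Finset.range (n + 1), (j + p).choose p := by
    have h := Finset.sum_range_reflect (fun j => (j + p).choose p) (n + 1)
    simp only [Nat.add_sub_cancel] at h
    exact h.symm ▸ rfl
  rw [hrefl, hockey]
  have h4 := Nat.choose_mul_factorial_mul_factorial
      (show p + 1 ≤ n + p + 1 by omega)
  have h5 : n + p + 1 - (p + 1) = n := by omega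
  rw [h5] at h4
  have h6 : 1 + p + n = n + p + 1 := by omega
  rw [h6, ← h4, Nat.factorial_succ]
  ring
end

section
/- Let a ∈ K and define a product on K[X] by X^k ∙ X^l = a·(k/(l+1))·X^{k+l} for all k,l ≥ 0 (where the coefficient is the rational number k/(l+1) viewed in K). Then this product satisfies the right preLie identity (P∙Q)∙R − P∙(Q∙R) = (P∙R)∙Q − P∙(R∙Q) for all P,Q,R ∈ K[X]. -/
/-!
The associator of a bilinear product on `K[X]` is trilinear, hence determined by its values on
monomials. For a product `X ^ k ∙ X ^ l = c k l • X ^ (k + l)` the associator of three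
monomials is a multiple of `X ^ (k + l + m)`, so the right pre-Lie identity reduces to the scalar
identity `c k l c (k+l) m - c l m c k (l+m) = (l ↔ m)`. For `c k l = a k / (l + 1)`, the difference
of the two sides is `a² k / ((l+1)(m+1))` times `(l - m) - (l(l+1) - m(m+1)) / (l+m+1)`, which
vanishes since `l(l+1) - m(m+1) = (l - m)(l + m + 1)`.
-/

open Polynomial

namespace LinearMap

variable {R M : Type*} [CommRing R] [AddCommGroup M] [Module R M]

def associator (B : M →ₗ[R] M →ₗ[R] M) : M →ₗ[R] M →ₗ[R] M →ₗ[R] M :=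
  llcomp R M M (M →ₗ[R] M) B ∘ₗ B - (llcomp R M M M ∘ₗ B).compl₂ B

@[simp]
theorem associator_apply (B : M →ₗ[R] M →ₗ[R] M) (x y z : M) :
    B.associator x y z = B (B x y) z - B x (B y z) := rfl

end LinearMap

section Polynomial

variable {R : Type*} [CommRing R] (B : R[X] →ₗ[R] R[X] →ₗ[R] R[X])

theorem associator_comm_of_X_pow
    (h : ∀ k l m : ℕ,
      B.associator (X ^ k) (X ^ l) (X ^ m) = B.associator (X ^ k) (X ^ m) (X ^ l))
    (P Q S : R[X]) : B.associator P Q S = B.associator P S Q := by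
  have : B.associator = (LinearMap.lflip (R₀ := R)).toLinearMap ∘ₗ B.associator := by
    ext k l m : 6
    simpa [monomial_one_right_eq_X_pow] using h k l m
  exact congr($this P Q S)

theorem associator_X_pow {c : ℕ → ℕ → R} (hB : ∀ k l : ℕ, B (X ^ k) (X ^ l) = c k l • X ^ (k + l))
    (k l m : ℕ) :
    B.associator (X ^ k) (X ^ l) (X ^ m) =
      (c k l * c (k + l) m - c l m * c k (l + m)) • X ^ (k + l + m) := by
  simp only [LinearMap.associator_apply, hB, map_smul, LinearMap.smul_apply, smul_smul, sub_smul,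
    add_assoc]

end Polynomial

def preLieCoeff {K : Type*} [Field K] (a : K) (k l : ℕ) : K := a * (k / (l + 1))

theorem preLieCoeff_assoc_comm {K : Type*} [Field K] [CharZero K] (a : K) (k l m : ℕ) :
    preLieCoeff a k l * preLieCoeff a (k + l) m - preLieCoeff a l m * preLieCoeff a k (l + m) =
      preLieCoeff a k m * preLieCoeff a (k + m) l - preLieCoeff a m l * preLieCoeff a k (m + l) := by
  have hlm : ((l + m : ℕ) : K) + 1 ≠ 0 := Nat.cast_add_one_ne_zero _
  unfold preLieCoeff
  rw [add_comm m l]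
  push_cast at hlm ⊢
  field_simp
  ring

theorem stmt_3 (K : Type*) [Field K] [CharZero K] (a : K)
    (B : K[X] →ₗ[K] K[X] →ₗ[K] K[X])
    (hB : ∀ k l : ℕ, B (X ^ k) (X ^ l) = (a * ((k : K) / ((l : K) + 1))) • X ^ (k + l)) :
    ∀ P Q R : K[X], B (B P Q) R - B P (B Q R) = B (B P R) Q - B P (B R Q) := by
  intro P Q R
  refine associator_comm_of_X_pow B (fun k l m => ?_) P Q R
  have hX := associator_X_pow (c := preLieCoeff a) B hB
  rw [hX, hX, preLieCoeff_assoc_comm, add_right_comm]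
end

section
/- Let a ∈ K and define a product on K[X] by X^k ∙ X^l = a·(k/(l+1))·X^{k+l}. Then this product satisfies the Leibniz identity: (P·Q)∙R = (P∙R)·Q + P·(Q∙R) for all P,Q,R ∈ K[X], where · is the usual polynomial multiplication. -/
/-!
Testing the bilinear map on monomials shows `B P R = P' * B X R`: for fixed `R`, the map
`P ↦ B P R` is the derivation `d/dX` followed by multiplication with `B X R`. The Leibniz
identity is then the product rule for `d/dX`.
-/

open Polynomial

theorem apply_eq_derivative_mul_apply_X {K : Type*} [Semifield K] (a : K)
    (B : K[X] →ₗ[K] K[X] →ₗ[K] K[X])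
    (hB : ∀ k l : ℕ, B (X ^ k) (X ^ l) = (a * ((k : K) / ((l : K) + 1))) • X ^ (k + l))
    (P R : K[X]) : B P R = derivative P * B X R := by
  have hBX : B = (LinearMap.mul K K[X]).compl₁₂ (derivative : K[X] →ₗ[K] K[X]) (B X) := by
    refine LinearMap.ext_basis (basisMonomials K) (basisMonomials K) fun k r => ?_
    simp only [coe_basisMonomials, ← C_mul_X_pow_eq_monomial, map_one, one_mul,
      LinearMap.compl₁₂_apply, LinearMap.mul_apply', derivative_X_pow]
    have hX := hB 1 r
    rw [pow_one] at hX
    rw [hB, hX]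
    rcases k with _ | m
    · simp
    · simp only [Nat.cast_add_one, add_tsub_cancel_right, Algebra.smul_def,
        algebraMap_eq]
      rw [mul_mul_mul_comm, ← C_mul, ← pow_add, Nat.cast_zero, add_assoc]
      congr 2
      ring
  exact LinearMap.congr_fun₂ hBX P R

theorem stmt_4_general (K : Type*) [Field K] (a : K)
    (B : K[X] →ₗ[K] K[X] →ₗ[K] K[X])
    (hB : ∀ k l : ℕ, B (X ^ k) (X ^ l) = (a * ((k : K) / ((l : K) + 1))) • X ^ (k + l)) :
    ∀ P Q R : K[X], B (P * Q) R = B P R * Q + P * B Q R := by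
  intro P Q R
  have hD := apply_eq_derivative_mul_apply_X a B hB
  rw [hD, hD P, hD Q, derivative_mul]
  ring

theorem stmt_4 (K : Type*) [Field K] [CharZero K] (a : K)
    (B : K[X] →ₗ[K] K[X] →ₗ[K] K[X])
    (hB : ∀ k l : ℕ, B (X ^ k) (X ^ l) = (a * ((k : K) / ((l : K) + 1))) • X ^ (k + l)) :
    ∀ P Q R : K[X], B (P * Q) R = B P R * Q + P * B Q R :=
  stmt_4_general K a B hB
end

section
/- Let a ∈ K, and give K[X] its usual Hopf algebra coproduct Δ determined by Δ(X) = X⊗1 + 1⊗X, so Δ(X^n) = ∑_k C(n,k) X^k ⊗ X^{n−k}. Define X^k ∙ X^l = a·(k/(l+1))·X^{k+l}. Then for all u, v ∈ K[X]: Δ(u ∙ v) = u^{(1)} ⊗ (u^{(2)} ∙ v) + (u^{(1)} ∙ v^{(1)}) ⊗ u^{(2)}·v^{(2)}, with Sweedler notation Δ(x) = x^{(1)} ⊗ x^{(2)}. -/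
set_option synthInstance.maxHeartbeats 1000000
set_option maxHeartbeats 1000000

open Polynomial TensorProduct Finset

private lemma key_scalar (K : Type*) [Field K] [CharZero K] (m n p : ℕ) :
    (m : K) / ((n : K) + 1) * ((m + n).choose p : K)
      = ((m - p : ℕ) : K) / ((n : K) + 1) * (m.choose p : K)
        + ∑ kj ∈ Finset.HasAntidiagonal.antidiagonal p,
            (m.choose kj.1 : K) * (n.choose kj.2 : K) * ((kj.1 : K) / ((kj.2 : K) + 1)) := by
  have hn : ((n : K) + 1) ≠ 0 := Nat.cast_add_one_ne_zero n
  match m with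
  | 0 =>
    have hz : ∑ kj ∈ Finset.HasAntidiagonal.antidiagonal p,
        ((0:ℕ).choose kj.1 : K) * (n.choose kj.2 : K) * ((kj.1 : K) / ((kj.2 : K) + 1)) = 0 := by
      apply Finset.sum_eq_zero
      intro kj _
      rcases Nat.eq_zero_or_pos kj.1 with h | h
      · simp [h]
      · rw [Nat.choose_eq_zero_of_lt h]
        simp
    rw [hz]
    rcases Nat.eq_zero_or_pos p with h | h
    · simp [h]
    · rw [Nat.choose_eq_zero_of_lt h]
      simp [Nat.zero_sub, Nat.choose_eq_zero_of_lt h]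
  | m' + 1 =>
    match p with
    | 0 => simp
    | p' + 1 =>
      have hterm : ∀ kj : ℕ × ℕ, kj ∈ Finset.HasAntidiagonal.antidiagonal p' →
          ((m' + 1).choose (kj.1 + 1) : K) * (n.choose kj.2 : K)
              * (((kj.1 + 1 : ℕ) : K) / ((kj.2 : K) + 1))
            = ((m' : K) + 1) / ((n : K) + 1)
              * ((m'.choose kj.1 : K) * ((n + 1).choose (kj.2 + 1) : K)) := by
        intro kj _
        have h1 : ((m' : K) + 1) * (m'.choose kj.1 : K)
            = ((m' + 1).choose (kj.1 + 1) : K) * ((kj.1 : K) + 1) := by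
          exact_mod_cast congrArg (Nat.cast : ℕ → K) (Nat.add_one_mul_choose_eq m' kj.1)
        have h2 : ((n : K) + 1) * (n.choose kj.2 : K)
            = ((n + 1).choose (kj.2 + 1) : K) * ((kj.2 : K) + 1) := by
          exact_mod_cast congrArg (Nat.cast : ℕ → K) (Nat.add_one_mul_choose_eq n kj.2)
        have hj : ((kj.2 : K) + 1) ≠ 0 := Nat.cast_add_one_ne_zero kj.2
        field_simp
        push_cast
        linear_combination (((m' + 1).choose (kj.1 + 1) : K) * ((kj.1 : K) + 1)) * h2
          - (((n + 1).choose (kj.2 + 1) : K) * ((kj.2 : K) + 1)) * h1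
      have hv : ∑ kj ∈ Finset.HasAntidiagonal.antidiagonal p',
          (m'.choose kj.1 : K) * ((n + 1).choose (kj.2 + 1) : K)
            = ((m' + (n + 1)).choose (p' + 1) : K) - (m'.choose (p' + 1) : K) := by
        have h := Nat.add_choose_eq m' (n + 1) (p' + 1)
        rw [Finset.Nat.sum_antidiagonal_succ'] at h
        have h' := congrArg (Nat.cast : ℕ → K) h
        push_cast at h'
        simp only [Nat.choose_zero_right, Nat.cast_one, mul_one] at h'
        linear_combination -h'
      have hsum : (∑ kj ∈ Finset.HasAntidiagonal.antidiagonal p',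
            ((m' + 1).choose (kj.1 + 1) : K) * (n.choose kj.2 : K)
              * (((kj.1 + 1 : ℕ) : K) / ((kj.2 : K) + 1)))
          = ((m' : K) + 1) / ((n : K) + 1)
              * (((m' + (n + 1)).choose (p' + 1) : K) - (m'.choose (p' + 1) : K)) := by
        rw [Finset.sum_congr rfl hterm, ← Finset.mul_sum, hv]
      rw [Finset.Nat.sum_antidiagonal_succ]
      simp only [Nat.cast_zero, zero_div, mul_zero, zero_add]
      rw [hsum]
      have h3 : ((m' + 1) * m'.choose (p' + 1) : ℕ)
          = (m' + 1).choose (p' + 1) * ((m' + 1) - (p' + 1)) := by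
        rw [Nat.add_one_mul_choose_eq, Nat.choose_succ_right_eq]
      have h3K : ((m' : K) + 1) * (m'.choose (p' + 1) : K)
          = ((m' + 1).choose (p' + 1) : K) * (((m' - p' : ℕ)) : K) := by
        rw [← Nat.succ_sub_succ m' p']
        exact_mod_cast congrArg (Nat.cast : ℕ → K) h3
      have hMN : ((m' + 1 + n).choose (p' + 1) : K) = ((m' + (n + 1)).choose (p' + 1) : K) := by
        rw [show m' + 1 + n = m' + (n + 1) from by omega]
      rw [hMN]
      push_cast
      field_simp
      linear_combination h3K

private lemma key_scalar' (K : Type*) [Field K] [CharZero K] (a : K) (m n p : ℕ) :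
    a * ((m : K) / ((n : K) + 1)) * ((m + n).choose p : K)
      = (m.choose p : K) * (a * (((m - p : ℕ) : K) / ((n : K) + 1)))
        + ∑ kj ∈ Finset.HasAntidiagonal.antidiagonal p,
            (m.choose kj.1 : K) * (n.choose kj.2 : K) * (a * ((kj.1 : K) / ((kj.2 : K) + 1))) := by
  have h := key_scalar K m n p
  have hs : ∑ kj ∈ Finset.HasAntidiagonal.antidiagonal p,
        (m.choose kj.1 : K) * (n.choose kj.2 : K) * (a * ((kj.1 : K) / ((kj.2 : K) + 1)))
      = a * ∑ kj ∈ Finset.HasAntidiagonal.antidiagonal p,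
          (m.choose kj.1 : K) * (n.choose kj.2 : K) * ((kj.1 : K) / ((kj.2 : K) + 1)) := by
    rw [Finset.mul_sum]
    exact Finset.sum_congr rfl fun _ _ => by ring
  rw [hs]
  linear_combination a * h

private lemma mono_sums (K : Type*) [Field K] [CharZero K] (a : K) (m n : ℕ) :
    (∑ p ∈ Finset.range (m + n + 1),
        (a * ((m : K) / ((n : K) + 1)) * ((m + n).choose p : K))
          • ((X ^ p : K[X]) ⊗ₜ[K] (X ^ (m + n - p) : K[X])))
      = (∑ k ∈ Finset.range (m + 1),
          ((m.choose k : K) * (a * (((m - k : ℕ) : K) / ((n : K) + 1))))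
            • ((X ^ k : K[X]) ⊗ₜ[K] (X ^ (m - k + n) : K[X])))
        + ∑ k ∈ Finset.range (m + 1), ∑ j ∈ Finset.range (n + 1),
            ((m.choose k : K) * (n.choose j : K) * (a * ((k : K) / ((j : K) + 1))))
              • ((X ^ (k + j) : K[X]) ⊗ₜ[K] (X ^ (m - k + (n - j)) : K[X])) := by
  -- rewrite T1 exponents and extend range
  have hT1 : (∑ k ∈ Finset.range (m + 1),
          ((m.choose k : K) * (a * (((m - k : ℕ) : K) / ((n : K) + 1))))
            • ((X ^ k : K[X]) ⊗ₜ[K] (X ^ (m - k + n) : K[X])))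
      = ∑ p ∈ Finset.range (m + n + 1),
          ((m.choose p : K) * (a * (((m - p : ℕ) : K) / ((n : K) + 1))))
            • ((X ^ p : K[X]) ⊗ₜ[K] (X ^ (m + n - p) : K[X])) := by
    rw [Finset.sum_congr rfl (fun k hk => by
      rw [show m - k + n = m + n - k from by
        have := Finset.mem_range.mp hk; omega])]
    apply Finset.sum_subset
    · intro k hk
      simp only [Finset.mem_range] at hk ⊢
      omega
    · intro k _ hk
      rw [Nat.choose_eq_zero_of_lt (by simpa using hk)]
      simp
  -- T2 : double sum to biUnion of antidiagonals
  have hT2 : (∑ k ∈ Finset.range (m + 1), ∑ j ∈ Finset.range (n + 1),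
            ((m.choose k : K) * (n.choose j : K) * (a * ((k : K) / ((j : K) + 1))))
              • ((X ^ (k + j) : K[X]) ⊗ₜ[K] (X ^ (m - k + (n - j)) : K[X])))
      = ∑ p ∈ Finset.range (m + n + 1),
          (∑ kj ∈ Finset.HasAntidiagonal.antidiagonal p,
            (m.choose kj.1 : K) * (n.choose kj.2 : K) * (a * ((kj.1 : K) / ((kj.2 : K) + 1))))
            • ((X ^ p : K[X]) ⊗ₜ[K] (X ^ (m + n - p) : K[X])) := by
    rw [← Finset.sum_product']
    have hsub : Finset.range (m + 1) ×ˢ Finset.range (n + 1)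
        ⊆ (Finset.range (m + n + 1)).biUnion (fun p => Finset.HasAntidiagonal.antidiagonal p) := by
      intro kj hkj
      simp only [Finset.mem_product, Finset.mem_range] at hkj
      simp only [Finset.mem_biUnion, Finset.mem_range, Finset.HasAntidiagonal.mem_antidiagonal]
      exact ⟨kj.1 + kj.2, by omega, rfl⟩
    rw [Finset.sum_subset hsub ?hz]
    case hz =>
      intro kj _ hkj
      simp only [Finset.mem_product, Finset.mem_range, not_and_or, not_lt] at hkj
      rcases hkj with h | h
      · rw [Nat.choose_eq_zero_of_lt (by omega)]; simp
      · rw [show n.choose kj.2 = 0 from Nat.choose_eq_zero_of_lt (by omega)]; simp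
    rw [Finset.sum_biUnion ?hd]
    case hd =>
      intro p _ q _ hpq
      simp only [Finset.disjoint_left, Finset.HasAntidiagonal.mem_antidiagonal]
      intro kj h1 h2
      exact hpq (h1 ▸ h2 ▸ rfl)
    refine Finset.sum_congr rfl fun p hp => ?_
    rw [Finset.sum_smul]
    refine Finset.sum_congr rfl fun kj hkj => ?_
    have hkj' := Finset.HasAntidiagonal.mem_antidiagonal.mp hkj
    have hp' := Finset.mem_range.mp hp
    by_cases hgood : kj.1 ≤ m ∧ kj.2 ≤ n
    · rw [show kj.1 + kj.2 = p from hkj', show m - kj.1 + (n - kj.2) = m + n - p from by omega]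
    · rcases not_and_or.mp hgood with h | h
      · rw [Nat.choose_eq_zero_of_lt (by omega)]; simp
      · rw [show n.choose kj.2 = 0 from Nat.choose_eq_zero_of_lt (by omega)]; simp
  rw [hT1, hT2, ← Finset.sum_add_distrib]
  refine Finset.sum_congr rfl fun p _ => ?_
  rw [← add_smul, key_scalar' K a m n p]

theorem stmt_5 (K : Type*) [Field K] [CharZero K] (a : K)
    (B : K[X] →ₗ[K] K[X] →ₗ[K] K[X])
    (hB : ∀ k l : ℕ, B (X ^ k) (X ^ l) = (a * ((k : K) / ((l : K) + 1))) • X ^ (k + l))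
    (D : K[X] →ₗ[K] K[X] ⊗[K] K[X])
    (hD : ∀ n : ℕ, D (X ^ n)
      = ∑ k ∈ Finset.range (n + 1),
          (n.choose k : K) • ((X ^ k : K[X]) ⊗ₜ[K] (X ^ (n - k) : K[X]))) :
    ∀ u v : K[X],
      D (B u v)
        = (LinearMap.lTensor (K[X]) (B.flip v)) (D u)
          + (TensorProduct.map (TensorProduct.lift B) (LinearMap.mul' K (K[X])))
              ((TensorProduct.tensorTensorTensorComm K (K[X]) (K[X]) (K[X]) (K[X]))
                (D u ⊗ₜ[K] D v)) := by
  have hmono : ∀ m n : ℕ,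
      D (B (X ^ m) (X ^ n))
        = (LinearMap.lTensor (K[X]) (B.flip (X ^ n))) (D (X ^ m))
          + (TensorProduct.map (TensorProduct.lift B) (LinearMap.mul' K (K[X])))
              ((TensorProduct.tensorTensorTensorComm K (K[X]) (K[X]) (K[X]) (K[X]))
                (D (X ^ m) ⊗ₜ[K] D (X ^ n))) := by
    intro m n
    have hLHS : D (B (X ^ m) (X ^ n))
        = ∑ p ∈ Finset.range (m + n + 1),
            (a * ((m : K) / ((n : K) + 1)) * ((m + n).choose p : K))
              • ((X ^ p : K[X]) ⊗ₜ[K] (X ^ (m + n - p) : K[X])) := by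
      rw [hB, map_smul, hD, Finset.smul_sum]
      exact Finset.sum_congr rfl fun p _ => by rw [smul_smul]
    have hR1 : (LinearMap.lTensor (K[X]) (B.flip (X ^ n))) (D (X ^ m))
        = ∑ k ∈ Finset.range (m + 1),
            ((m.choose k : K) * (a * (((m - k : ℕ) : K) / ((n : K) + 1))))
              • ((X ^ k : K[X]) ⊗ₜ[K] (X ^ (m - k + n) : K[X])) := by
      rw [hD, map_sum]
      refine Finset.sum_congr rfl fun k _ => ?_
      rw [map_smul, LinearMap.lTensor_tmul, LinearMap.flip_apply, hB, tmul_smul, smul_smul]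
    have hR2 : (TensorProduct.map (TensorProduct.lift B) (LinearMap.mul' K (K[X])))
          ((TensorProduct.tensorTensorTensorComm K (K[X]) (K[X]) (K[X]) (K[X]))
            (D (X ^ m) ⊗ₜ[K] D (X ^ n)))
        = ∑ k ∈ Finset.range (m + 1), ∑ j ∈ Finset.range (n + 1),
            ((m.choose k : K) * (n.choose j : K) * (a * ((k : K) / ((j : K) + 1))))
              • ((X ^ (k + j) : K[X]) ⊗ₜ[K] (X ^ (m - k + (n - j)) : K[X])) := by
      rw [hD m, hD n, sum_tmul, map_sum, map_sum]
      refine Finset.sum_congr rfl fun k _ => ?_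
      rw [← smul_tmul', map_smul, map_smul, tmul_sum, map_sum, map_sum, Finset.smul_sum]
      refine Finset.sum_congr rfl fun j _ => ?_
      rw [tmul_smul, map_smul, map_smul, tensorTensorTensorComm_tmul, TensorProduct.map_tmul,
        TensorProduct.lift.tmul, LinearMap.mul'_apply, hB, ← pow_add, smul_tmul',
        smul_smul, ← smul_tmul', smul_smul, ← mul_assoc]
    rw [hLHS, hR1, hR2]
    exact mono_sums K a m n
  intro u v
  induction u using Polynomial.induction_on' with
  | add p q hp hq =>
    simp only [map_add, LinearMap.add_apply, add_tmul, hp, hq]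
    abel
  | monomial i c =>
    induction v using Polynomial.induction_on' with
    | add p q hp hq =>
      simp only [map_add, LinearMap.add_apply, tmul_add, LinearMap.lTensor_add, hp, hq]
      abel
    | monomial j d =>
      rw [← Polynomial.smul_X_eq_monomial, ← Polynomial.smul_X_eq_monomial]
      simp only [map_smul, LinearMap.smul_apply, LinearMap.lTensor_smul, ← smul_tmul',
        tmul_smul, smul_smul]
      rw [hmono i j]
      simp [smul_add, smul_smul, mul_comm]
end

section
/- Let N ≥ 1, a ∈ K nonzero, b ∈ K with b not a nonpositive integer. Define λ_j = a/(j/N + b) if N divides j and j ≥ 1, λ_0 = λ arbitrary, and λ_j = 0 otherwise. Then for all j,k ≥ 1: (j·λ_k − k·λ_j)·λ_{j+k} = (j−k)·λ_j·λ_k. -/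
/-!
The sequence `n ↦ a / (n + b)` satisfies the pre-Lie condition by a direct computation:
clearing denominators, both sides reduce to `a² (p - q) (p + q + b)`. The condition is
homogeneous of degree one in the indices, so it survives spreading a solution out along the
multiples of `N` and padding with zeros: when exactly one of `j`, `k` is a multiple of `N`,
so is not `j + k`, and both sides vanish.
-/

section

variable {K : Type*} [Field K]

/-- The condition on `λ` for `X^i ∙ X^j = i λ_j X^{i+j}` to be a pre-Lie product. -/
def IsPreLieWeights (lam : ℕ → K) : Prop :=
  ∀ j k : ℕ, 1 ≤ j → 1 ≤ k →
    ((j : K) * lam k - (k : K) * lam j) * lam (j + k) = ((j : K) - (k : K)) * lam j * lam k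

theorem isPreLieWeights_div_add {a b : K} (hb : ∀ n : ℕ, b ≠ -(n : K)) :
    IsPreLieWeights fun n : ℕ => a / ((n : K) + b) := by
  have hne : ∀ n : ℕ, (n : K) + b ≠ 0 := fun n h => hb n (by linear_combination h)
  intro p q _ _
  have hpq := hne (p + q)
  push_cast at hpq ⊢
  field_simp [hne p, hne q, hpq]
  ring

theorem IsPreLieWeights.dilate {mu lam : ℕ → K} (hmu : IsPreLieWeights mu) {N : ℕ}
    (hdvd : ∀ j : ℕ, 1 ≤ j → N ∣ j → lam j = mu (j / N))
    (hother : ∀ j : ℕ, 1 ≤ j → ¬ N ∣ j → lam j = 0) :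
    IsPreLieWeights lam := by
  intro j k hj hk
  have hjk : 1 ≤ j + k := le_add_right hj
  by_cases hNj : N ∣ j <;> by_cases hNk : N ∣ k
  · have hN : 0 < N := Nat.pos_of_dvd_of_pos hNj hj
    obtain ⟨p, rfl⟩ := hNj
    obtain ⟨q, rfl⟩ := hNk
    have hp : 1 ≤ p := Nat.pos_of_mul_pos_left hj
    have hq : 1 ≤ q := Nat.pos_of_mul_pos_left hk
    rw [hdvd _ hj (dvd_mul_right N p), hdvd _ hk (dvd_mul_right N q),
      hdvd _ hjk (dvd_add (dvd_mul_right N p) (dvd_mul_right N q)), ← mul_add,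
      Nat.mul_div_cancel_left p hN, Nat.mul_div_cancel_left q hN,
      Nat.mul_div_cancel_left (p + q) hN]
    push_cast
    linear_combination (N : K) * hmu p q hp hq
  · rw [hother k hk hNk, hother (j + k) hjk fun h => hNk ((Nat.dvd_add_right hNj).mp h)]
    ring
  · rw [hother j hj hNj, hother (j + k) hjk fun h => hNj ((Nat.dvd_add_left hNk).mp h)]
    ring
  · rw [hother j hj hNj, hother k hk hNk]
    ring

end

theorem stmt_7_general (K : Type*) [Field K] (N : ℕ)
    (a b : K) (hb : ∀ n : ℕ, b ≠ -(n : K))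
    (lamSeq : ℕ → K)
    (hdvd : ∀ j : ℕ, 1 ≤ j → N ∣ j → lamSeq j = a / (((j / N : ℕ) : K) + b))
    (hother : ∀ j : ℕ, 1 ≤ j → ¬ N ∣ j → lamSeq j = 0) :
    ∀ j k : ℕ, 1 ≤ j → 1 ≤ k →
      ((j : K) * lamSeq k - (k : K) * lamSeq j) * lamSeq (j + k)
        = ((j : K) - (k : K)) * lamSeq j * lamSeq k :=
  (isPreLieWeights_div_add hb).dilate hdvd hother

theorem stmt_7 (K : Type*) [Field K] [CharZero K] (N : ℕ) (hN : 1 ≤ N)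
    (a b lam : K) (ha : a ≠ 0) (hb : ∀ n : ℕ, b ≠ -(n : K))
    (lamSeq : ℕ → K) (h0 : lamSeq 0 = lam)
    (hdvd : ∀ j : ℕ, 1 ≤ j → N ∣ j → lamSeq j = a / (((j / N : ℕ) : K) + b))
    (hother : ∀ j : ℕ, 1 ≤ j → ¬ N ∣ j → lamSeq j = 0) :
    ∀ j k : ℕ, 1 ≤ j → 1 ≤ k →
      ((j : K) * lamSeq k - (k : K) * lamSeq j) * lamSeq (j + k)
        = ((j : K) - (k : K)) * lamSeq j * lamSeq k :=
  stmt_7_general K N a b hb lamSeq hdvd hother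
end

section
/- Let (λ_k)_{k≥0} be scalars in a field of characteristic zero satisfying (j·λ_k − k·λ_j)·λ_{j+k} = (j−k)·λ_j·λ_k for all j,k ≥ 1. Let N = min{j ≥ 1 : λ_j ≠ 0} (assuming it exists). Then for every i ≥ 1 not divisible by N, λ_i = 0. -/
/-! If `λ_N ≠ 0` and `λ_k = 0`, the relation for `(j, k) = (N, k)` reads `-k λ_N λ_{N+k} = 0`, so
`λ_{N+k} = 0`. Starting from the vanishing of `λ_r` for `1 ≤ r < N` (minimality of `N`), this
propagates along every residue class `r + N ℕ` with `r ≢ 0 (mod N)`. -/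

section PreLieSequence

variable {K : Type*} [Field K]

def PreLieRelation (lam : ℕ → K) : Prop :=
  ∀ j k : ℕ, 1 ≤ j → 1 ≤ k →
    ((j : K) * lam k - (k : K) * lam j) * lam (j + k) = ((j : K) - (k : K)) * lam j * lam k

variable [CharZero K] {lam : ℕ → K}

theorem PreLieRelation.eq_zero_add {j k : ℕ} (hrel : PreLieRelation lam) (hj : 1 ≤ j)
    (hk : 1 ≤ k) (hj0 : lam j ≠ 0) (hk0 : lam k = 0) : lam (j + k) = 0 := by
  have h := hrel j k hj hk
  rw [hk0] at h
  have hprod : (k : K) * lam j * lam (j + k) = 0 := by linear_combination -h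
  have hkK : (k : K) ≠ 0 := Nat.cast_ne_zero.mpr (by omega)
  simpa [hkK, hj0] using hprod

theorem PreLieRelation.eq_zero_add_mul {N r : ℕ} (hrel : PreLieRelation lam) (hN : 1 ≤ N)
    (hN0 : lam N ≠ 0) (hr : 1 ≤ r) (hr0 : lam r = 0) (q : ℕ) : lam (r + N * q) = 0 := by
  induction q with
  | zero => simpa using hr0
  | succ q ih =>
    have hstep := hrel.eq_zero_add hN (by omega : 1 ≤ r + N * q) hN0 ih
    rwa [show N + (r + N * q) = r + N * (q + 1) by ring] at hstep

end PreLieSequence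

theorem stmt_8 (K : Type*) [Field K] [CharZero K] (lam : ℕ → K)
    (hpre : ∀ j k : ℕ, 1 ≤ j → 1 ≤ k →
      ((j : K) * lam k - (k : K) * lam j) * lam (j + k)
        = ((j : K) - (k : K)) * lam j * lam k)
    (N : ℕ) (hN1 : 1 ≤ N) (hNne : lam N ≠ 0)
    (hNmin : ∀ j : ℕ, 1 ≤ j → j < N → lam j = 0) :
    ∀ i : ℕ, 1 ≤ i → ¬ N ∣ i → lam i = 0 := by
  intro i _ hNi
  have hr : 1 ≤ i % N := Nat.pos_of_ne_zero fun h => hNi (Nat.dvd_of_mod_eq_zero h)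
  have hr0 : lam (i % N) = 0 := hNmin _ hr (Nat.mod_lt i hN1)
  have h := PreLieRelation.eq_zero_add_mul hpre hN1 hNne hr hr0 (i / N)
  rwa [Nat.mod_add_div] at h
end

section
/- Let (λ_k)_{k≥0} be scalars in a field of characteristic zero satisfying (jλ_k − kλ_j)λ_{j+k} = (j−k)λ_jλ_k for all j,k ≥ 1, with λ_1 ≠ 0 and λ_2 = 0. Then λ_k = 0 for all k ≥ 2. -/
theorem succ_eq_zero_of_eq_zero {R : Type*} [CommRing R] [NoZeroDivisors R] [CharZero R]
    {lam : ℕ → R} {n : ℕ} (hn : n ≠ 0)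
    (hrec : (lam n - n * lam 1) * lam (n + 1) = (1 - n) * lam 1 * lam n)
    (h1 : lam 1 ≠ 0) (hlam : lam n = 0) : lam (n + 1) = 0 := by
  have hprod : (n : R) * lam 1 * lam (n + 1) = 0 := by
    rw [hlam] at hrec
    linear_combination -hrec
  exact (mul_eq_zero.mp hprod).resolve_left (mul_ne_zero (Nat.cast_ne_zero.mpr hn) h1)

theorem stmt_9 (K : Type*) [Field K] [CharZero K] (lam : ℕ → K)
    (hpre : ∀ j k : ℕ, 1 ≤ j → 1 ≤ k →
      ((j : K) * lam k - (k : K) * lam j) * lam (j + k)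
        = ((j : K) - (k : K)) * lam j * lam k)
    (h1 : lam 1 ≠ 0) (h2 : lam 2 = 0) :
    ∀ k : ℕ, 2 ≤ k → lam k = 0 := by
  intro k hk
  induction k, hk using Nat.le_induction with
  | base => exact h2
  | succ n hn ih =>
    have hrec := hpre 1 n le_rfl (by omega)
    rw [Nat.cast_one, one_mul, add_comm 1 n] at hrec
    exact succ_eq_zero_of_eq_zero (by omega) hrec h1 ih
end

section
/- Let (λ_l)_{l≥1} be scalars in a field of characteristic zero satisfying, for all l ≥ 2: λ_l = (1/(l−1))·∑_{i=1}^{l−1} C(l,i)·λ_i·λ_{l−i}. Then λ_l = l!·λ_1^l for all l ≥ 1. -/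
open Nat Finset

theorem choose_mul_factorial_pow_mul_factorial_pow {R : Type*} [CommSemiring R] (a : R)
    {l i : ℕ} (hi : i ≤ l) :
    (l.choose i : R) * (i ! * a ^ i) * ((l - i)! * a ^ (l - i)) = l ! * a ^ l := by
  calc (l.choose i : R) * (i ! * a ^ i) * ((l - i)! * a ^ (l - i))
      = ((l.choose i * i ! * (l - i)! : ℕ) : R) * (a ^ i * a ^ (l - i)) := by
        push_cast; ring
    _ = l ! * a ^ l := by
        rw [choose_mul_factorial_mul_factorial hi, ← pow_add, Nat.add_sub_cancel' hi]

theorem sum_Ico_choose_mul_factorial_pow {R : Type*} [CommRing R] (a : R) {l : ℕ}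
    (hl : 1 ≤ l) :
    ∑ i ∈ Ico 1 l, (l.choose i : R) * (i ! * a ^ i) * ((l - i)! * a ^ (l - i)) =
      ((l : R) - 1) * (l ! * a ^ l) := by
  rw [sum_congr rfl fun i hi => choose_mul_factorial_pow_mul_factorial_pow a
    (mem_Ico.mp hi).2.le, sum_const, card_Ico, nsmul_eq_mul, Nat.cast_sub hl, Nat.cast_one]

theorem stmt_10 (K : Type*) [Field K] [CharZero K] (lam : ℕ → K)
    (hrec : ∀ l : ℕ, 2 ≤ l →
      lam l = (1 / ((l : K) - 1)) *
        ∑ i ∈ Finset.Ico 1 l, (l.choose i : K) * lam i * lam (l - i)) :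
    ∀ l : ℕ, 1 ≤ l → lam l = (l.factorial : K) * lam 1 ^ l := by
  intro l
  induction l using Nat.strong_induction_on with
  | _ l ih =>
    intro hl
    obtain rfl | hl2 := hl.eq_or_lt
    · simp
    have hsum : ∑ i ∈ Ico 1 l, (l.choose i : K) * lam i * lam (l - i) =
        ((l : K) - 1) * (l ! * lam 1 ^ l) := by
      rw [← sum_Ico_choose_mul_factorial_pow _ hl]
      refine sum_congr rfl fun i hi => ?_
      obtain ⟨hi1, hil⟩ := mem_Ico.mp hi
      rw [ih i hil hi1, ih (l - i) (by omega) (by omega)]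
    have hl1 : (l : K) - 1 ≠ 0 := sub_ne_zero.mpr (by exact_mod_cast hl2.ne')
    rw [hrec l hl2, hsum, one_div, inv_mul_cancel_left₀ hl1]
end

section
/- Let G be an abelian group and (λ(g,h))_{g,h∈G} a family of scalars with λ(g,1) = 0 for all g. Define a bilinear product on KG by g ∙ h = λ(g,h)·(g − gh). Then ∙ satisfies the Leibniz identity (xy)∙z = (x∙z)y + x(y∙z) for all x,y,z ∈ KG if and only if λ(gh,k) = λ(g,k) + λ(h,k) for all g,h,k ∈ G. -/
theorem stmt_12 (K : Type*) [Field K] [CharZero K] (G : Type*) [CommGroup G]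
    (lam : G → G → K) (hlam1 : ∀ g : G, lam g 1 = 0)
    (B : MonoidAlgebra K G →ₗ[K] MonoidAlgebra K G →ₗ[K] MonoidAlgebra K G)
    (hB : ∀ g h : G, B (MonoidAlgebra.single g 1) (MonoidAlgebra.single h 1)
      = lam g h • (MonoidAlgebra.single g (1 : K) - MonoidAlgebra.single (g * h) (1 : K))) :
    (∀ x y z : MonoidAlgebra K G, B (x * y) z = B x z * y + x * B y z) ↔
      (∀ g h k : G, lam (g * h) k = lam g k + lam h k) := by
  constructor
  · intro H g h k
    by_cases hk : k = 1
    · subst hk; simp [hlam1]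
    have h0 := H (MonoidAlgebra.single g 1) (MonoidAlgebra.single h 1)
      (MonoidAlgebra.single k 1)
    rw [MonoidAlgebra.single_mul_single, one_mul] at h0
    rw [hB, hB, hB] at h0
    simp only [smul_sub, sub_mul, mul_sub, smul_mul_assoc, mul_smul_comm,
      MonoidAlgebra.single_mul_single, one_mul, mul_one] at h0
    have e1 : g * h * k ≠ g * h := fun e =>
      hk (mul_left_cancel (a := g * h) (b := k) (c := 1) (by rw [mul_one]; exact e))
    have e2 : g * k * h ≠ g * h := fun e => e1 (by rw [mul_right_comm] at e; exact e)
    have e3 : g * (h * k) ≠ g * h := fun e => e1 (by rw [← mul_assoc] at e; exact e)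
    simp only [MonoidAlgebra.smul_single'] at h0
    have h1 := congrArg (fun x : MonoidAlgebra K G => x.coeff (g * h)) h0
    simp [MonoidAlgebra.coeff_sub, MonoidAlgebra.coeff_add, MonoidAlgebra.coeff_single, map_sub, map_add, Finsupp.single_apply, e1, e2, e3] at h1
    exact h1
  · intro hl x y z
    induction x using MonoidAlgebra.induction_on with
    | smul r f hf =>
      simp only [smul_mul_assoc, map_smul, LinearMap.smul_apply, hf, smul_add]
    | add f f' hf hf' =>
      simp only [add_mul, map_add, LinearMap.add_apply, hf, hf']; abel
    | of g =>
      induction y using MonoidAlgebra.induction_on with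
      | smul r f hf =>
        simp only [mul_smul_comm, map_smul, LinearMap.smul_apply, hf, smul_add,
          smul_mul_assoc]
      | add f f' hf hf' =>
        simp only [mul_add, map_add, LinearMap.add_apply, hf, hf']; abel
      | of h =>
        induction z using MonoidAlgebra.induction_on with
        | smul r f hf =>
          simp only [map_smul, LinearMap.smul_apply, hf, smul_add, smul_mul_assoc,
            mul_smul_comm]
        | add f f' hf hf' =>
          simp only [map_add, hf, hf']; noncomm_ring
        | of k =>
          simp only [MonoidAlgebra.of_apply, MonoidAlgebra.single_mul_single, one_mul, hB,
            smul_sub, sub_mul, mul_sub, smul_mul_assoc, mul_smul_comm, mul_one, hl,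
            add_smul]
          rw [mul_right_comm g k h, mul_assoc g h k]
          abel
end

section
/- Let G be an abelian group, (λ(g,h))_{g,h∈G} scalars with λ(g,1) = 0 and λ(gh,k) = λ(g,k) + λ(h,k) for all g,h,k. Define g ∙ h = λ(g,h)(g − gh) on KG. Then ∙ satisfies the right preLie identity if and only if for all g,h,k ∈ G with hk ≠ 1: λ(g,hk)λ(h,k) − λ(g,h)λ(h,k) = λ(g,hk)λ(k,h) − λ(g,k)λ(k,h). -/
theorem stmt_13 (K : Type*) [Field K] [CharZero K] (G : Type*) [CommGroup G]
    (lam : G → G → K) (hlam1 : ∀ g : G, lam g 1 = 0)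
    (hadd : ∀ g h k : G, lam (g * h) k = lam g k + lam h k)
    (B : MonoidAlgebra K G →ₗ[K] MonoidAlgebra K G →ₗ[K] MonoidAlgebra K G)
    (hB : ∀ g h : G, B (MonoidAlgebra.single g 1) (MonoidAlgebra.single h 1)
      = lam g h • (MonoidAlgebra.single g (1 : K) - MonoidAlgebra.single (g * h) (1 : K))) :
    (∀ x y z : MonoidAlgebra K G,
        B (B x y) z - B x (B y z) = B (B x z) y - B x (B z y)) ↔
      (∀ g h k : G, h * k ≠ 1 →
        lam g (h * k) * lam h k - lam g h * lam h k
          = lam g (h * k) * lam k h - lam g k * lam k h) := by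
  have key : ∀ g h k : G,
      (B (B (MonoidAlgebra.single g 1) (MonoidAlgebra.single h 1)) (MonoidAlgebra.single k 1)
        - B (MonoidAlgebra.single g 1)
            (B (MonoidAlgebra.single h 1) (MonoidAlgebra.single k 1)))
      - (B (B (MonoidAlgebra.single g 1) (MonoidAlgebra.single k 1)) (MonoidAlgebra.single h 1)
        - B (MonoidAlgebra.single g 1)
            (B (MonoidAlgebra.single k 1) (MonoidAlgebra.single h 1)))
      = (lam g (h*k) * lam h k - lam g h * lam h k
          - (lam g (h*k) * lam k h - lam g k * lam k h))
        • (MonoidAlgebra.single g (1:K) - MonoidAlgebra.single (g*(h*k)) (1:K)) := by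
    intro g h k
    simp only [hB, map_sub, map_smul, LinearMap.sub_apply, LinearMap.smul_apply, hB, hadd]
    simp only [mul_assoc, mul_comm k h]
    module
  constructor
  · intro H g h k hhk
    have hkey := key g h k
    rw [H, sub_self] at hkey
    have hg : g ≠ g * (h * k) := by
      simp only [ne_eq, left_eq_mul]
      exact hhk
    have hkey' : (0 : G →₀ K) = (lam g (h*k) * lam h k - lam g h * lam h k
          - (lam g (h*k) * lam k h - lam g k * lam k h))
        • (Finsupp.single g (1:K) - Finsupp.single (g*(h*k)) (1:K)) := congrArg MonoidAlgebra.coeff hkey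
    have := DFunLike.congr_fun hkey' g
    simp only [Finsupp.coe_zero, Pi.zero_apply, Finsupp.smul_apply, Finsupp.sub_apply,
      Finsupp.single_eq_same, Finsupp.single_eq_of_ne' (Ne.symm hg), sub_zero,
      smul_eq_mul, mul_one] at this
    linear_combination -this
  · intro H x y z
    have hsingle : ∀ g h k : G,
        B (B (MonoidAlgebra.single g 1) (MonoidAlgebra.single h 1)) (MonoidAlgebra.single k 1)
          - B (MonoidAlgebra.single g 1)
              (B (MonoidAlgebra.single h 1) (MonoidAlgebra.single k 1))
        = B (B (MonoidAlgebra.single g 1) (MonoidAlgebra.single k 1)) (MonoidAlgebra.single h 1)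
          - B (MonoidAlgebra.single g 1)
              (B (MonoidAlgebra.single k 1) (MonoidAlgebra.single h 1)) := by
      intro g h k
      have hkey := key g h k
      by_cases hc : h * k = 1
      · rw [hc, mul_one, sub_self, smul_zero] at hkey
        exact sub_eq_zero.mp hkey
      · rw [sub_eq_zero_of_eq (H g h k hc), zero_smul] at hkey
        exact sub_eq_zero.mp hkey
    induction x using MonoidAlgebra.induction_on with
    | of g =>
      induction y using MonoidAlgebra.induction_on with
      | of h =>
        induction z using MonoidAlgebra.induction_on with
        | of k => simpa using hsingle g h k
        | add z1 z2 ih1 ih2 =>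
          simp only [map_add, LinearMap.add_apply]
          rw [add_sub_add_comm, add_sub_add_comm, ih1, ih2]
        | smul r z1 ih =>
          simp only [map_smul, LinearMap.smul_apply]
          rw [← smul_sub, ← smul_sub, ih]
      | add y1 y2 ih1 ih2 =>
        simp only [map_add, LinearMap.add_apply]
        rw [add_sub_add_comm, add_sub_add_comm, ih1, ih2]
      | smul r y1 ih =>
        simp only [map_smul, LinearMap.smul_apply]
        rw [← smul_sub, ← smul_sub, ih]
    | add x1 x2 ih1 ih2 =>
      simp only [map_add, LinearMap.add_apply]
      rw [add_sub_add_comm, add_sub_add_comm, ih1, ih2]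
    | smul r x1 ih =>
      simp only [map_smul, LinearMap.smul_apply]
      rw [← smul_sub, ← smul_sub, ih]
end

section
/- Let G be an abelian group in which every element has finite order, and suppose KG carries a bilinear product ∙ making (KG, m, ∙, Δ) a Com-PreLie bialgebra over a field K of characteristic zero. Then ∙ = 0. -/
open TensorProduct

/-- Coefficient extraction from a tensor square of a monoid algebra. -/
noncomputable def coeff2 (K : Type*) [Field K] (G : Type*) [CommGroup G] (u v : G) :
    MonoidAlgebra K G ⊗[K] MonoidAlgebra K G →ₗ[K] K :=
  (TensorProduct.lid K K).toLinearMap ∘ₗ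
    TensorProduct.map (Finsupp.lapply u ∘ₗ (MonoidAlgebra.coeffLinearEquiv K).toLinearMap)
      (Finsupp.lapply v ∘ₗ (MonoidAlgebra.coeffLinearEquiv K).toLinearMap)

theorem coeff2_tmul (K : Type*) [Field K] (G : Type*) [CommGroup G] (u v : G)
    (x y : MonoidAlgebra K G) : coeff2 K G u v (x ⊗ₜ[K] y) = x.coeff u * y.coeff v := by
  simp only [coeff2, LinearMap.coe_comp, LinearEquiv.coe_coe, Function.comp_apply,
    TensorProduct.map_tmul, TensorProduct.lid_tmul, smul_eq_mul]
  rfl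

theorem ma_lhom_ext {K G N : Type*} [Field K] [CommGroup G] [AddCommMonoid N] [Module K N]
    {φ ψ : MonoidAlgebra K G →ₗ[K] N}
    (h : ∀ a b, φ (MonoidAlgebra.single a b) = ψ (MonoidAlgebra.single a b)) : φ = ψ :=
  MonoidAlgebra.lhom_ext' fun a => LinearMap.ext fun b => h a b

theorem stmt_14 (K : Type*) [Field K] [CharZero K] (G : Type*) [CommGroup G]
    (htor : ∀ g : G, ∃ n : ℕ, 0 < n ∧ g ^ n = 1)
    (B : MonoidAlgebra K G →ₗ[K] MonoidAlgebra K G →ₗ[K] MonoidAlgebra K G)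
    (hLeibniz : ∀ x y z : MonoidAlgebra K G, B (x * y) z = B x z * y + x * B y z)
    (hPreLie : ∀ x y z : MonoidAlgebra K G,
      B (B x y) z - B x (B y z) = B (B x z) y - B x (B z y))
    (D : MonoidAlgebra K G →ₗ[K] MonoidAlgebra K G ⊗[K] MonoidAlgebra K G)
    (hD : ∀ g : G, D (MonoidAlgebra.single g 1)
      = MonoidAlgebra.single g (1 : K) ⊗ₜ[K] MonoidAlgebra.single g (1 : K))
    (hcompat : ∀ x y : MonoidAlgebra K G,
      D (B x y)
        = (LinearMap.lTensor (MonoidAlgebra K G) (B.flip y)) (D x)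
          + (TensorProduct.map (TensorProduct.lift B)
              (LinearMap.mul' K (MonoidAlgebra K G)))
              ((TensorProduct.tensorTensorTensorComm K (MonoidAlgebra K G)
                  (MonoidAlgebra K G) (MonoidAlgebra K G) (MonoidAlgebra K G))
                (D x ⊗ₜ[K] D y))) :
    B = 0 := by
  classical
  -- Coefficient computation for D
  have hDc : ∀ (x : MonoidAlgebra K G) (u v : G),
      coeff2 K G u v (D x) = if u = v then x.coeff u else 0 := by
    intro x u v
    induction x using MonoidAlgebra.induction_linear with
    | zero => simp
    | add f g hf hg =>
      have : D (f + g) = D f + D g := map_add D f g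
      rw [this, map_add, hf, hg]
      by_cases h : u = v <;> simp [h, MonoidAlgebra.coeff_add]
    | single a b =>
      have h1 : (MonoidAlgebra.single a b : MonoidAlgebra K G)
          = b • MonoidAlgebra.single a (1 : K) := by
        simp [MonoidAlgebra.smul_single]
      rw [h1, map_smul, map_smul, hD a, coeff2_tmul]
      by_cases hau : a = u <;> by_cases hav : a = v <;> by_cases huv : u = v <;>
        simp_all [MonoidAlgebra.coeff_single_apply, Finsupp.single_apply]
  -- the key coefficient relation
  set e : G → MonoidAlgebra K G := fun g => MonoidAlgebra.single g (1 : K) with he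
  have key : ∀ g h u v : G,
      (if u = v then (B (e g) (e h)).coeff u else 0)
        = (if g = u then (1:K) else 0) * (B (e g) (e h)).coeff v
          + (B (e g) (e h)).coeff u * (if g * h = v then (1:K) else 0) := by
    intro g h u v
    have hc := hcompat (e g) (e h)
    rw [hD g, hD h] at hc
    have hr : D (B (e g) (e h))
        = e g ⊗ₜ[K] (B (e g) (e h)) + (B (e g) (e h)) ⊗ₜ[K] e (g * h) := by
      rw [hc]
      simp [LinearMap.lTensor_tmul, TensorProduct.tensorTensorTensorComm_tmul,
        TensorProduct.map_tmul, TensorProduct.lift.tmul, LinearMap.mul'_apply,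
        he, MonoidAlgebra.single_mul_single]
    have hcg := congrArg (coeff2 K G u v) hr
    rw [hDc] at hcg
    rw [hcg, map_add, coeff2_tmul, coeff2_tmul]
    simp [he, MonoidAlgebra.coeff_single_apply, Finsupp.single_apply, mul_comm]
  -- λ(g,h) := coefficient of B(g,h) at g
  set lam : G → G → K := fun g h => (B (e g) (e h)).coeff g with hlam
  -- B(1,h) = 0
  have hB1 : ∀ h : G, B (e 1) (e h) = 0 := by
    intro h
    have h1 : (e 1 : MonoidAlgebra K G) * e 1 = e 1 := by
      simp [he, MonoidAlgebra.single_mul_single]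
    have hone : (e 1 : MonoidAlgebra K G) = 1 := rfl
    have hl := hLeibniz (e 1) (e 1) (e h)
    rw [h1, hone, mul_one, one_mul] at hl
    exact (add_eq_left.mp hl.symm)
  -- additivity of lam in the first variable
  have hadd : ∀ g g' h : G, lam (g * g') h = lam g h + lam g' h := by
    intro g g' h
    have hmul : e g * e g' = e (g * g') := by
      simp [he, MonoidAlgebra.single_mul_single]
    have hl := hLeibniz (e g) (e g') (e h)
    rw [hmul] at hl
    have h4 : ((B (e (g * g'))) (e h)).coeff (g * g')
        = ((B (e g)) (e h) * e g').coeff (g * g') + (e g * (B (e g')) (e h)).coeff (g * g') := by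
      rw [hl]; rfl
    have e_def : ∀ a : G, e a = MonoidAlgebra.single a 1 := fun a => rfl
    rw [e_def g', e_def g, MonoidAlgebra.coeff_mul_single_apply, MonoidAlgebra.coeff_single_mul_apply,
      mul_inv_cancel_right, one_mul, mul_one, inv_mul_cancel_left] at h4
    exact h4
  -- lam vanishes
  have hlam0 : ∀ g h : G, lam g h = 0 := by
    intro g h
    have h1 : lam 1 h = 0 := by
      rw [hlam]; simp only; rw [hB1 h]; simp
    have hpow : ∀ n : ℕ, lam (g ^ n) h = n • lam g h := by
      intro n
      induction n with
      | zero => simpa using h1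
      | succ n ih =>
        rw [pow_succ, hadd, ih, succ_nsmul]
    obtain ⟨n, hn, hgn⟩ := htor g
    have := hpow n
    rw [hgn, h1] at this
    have hnK : (n : K) ≠ 0 := Nat.cast_ne_zero.mpr hn.ne'
    have : (n : K) * lam g h = 0 := by rw [← nsmul_eq_mul]; exact this.symm
    exact (mul_eq_zero.mp this).resolve_left hnK
  -- B vanishes on group-like elements
  have hBe : ∀ g h : G, B (e g) (e h) = 0 := by
    intro g h
    ext k
    simp only [MonoidAlgebra.coeff_zero, Finsupp.coe_zero, Pi.zero_apply]
    by_cases hk1 : k = g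
    · subst hk1; exact hlam0 k h
    by_cases hk2 : k = g * h
    · subst hk2
      have := key g h g (g * h)
      rw [if_pos rfl, if_pos rfl, one_mul, mul_one] at this
      rw [if_neg (fun hgh => hk1 hgh.symm)] at this
      have hg0 : (B (e g) (e h)).coeff g = 0 := hlam0 g h
      rw [hg0, add_zero] at this
      exact this.symm
    · have := key g h k k
      rw [if_pos rfl, if_neg (fun hgk => hk1 hgk.symm),
        if_neg (fun hgh => hk2 hgh.symm), zero_mul, mul_zero, add_zero] at this
      exact this
  -- conclude
  apply ma_lhom_ext
  intro a b
  apply ma_lhom_ext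
  intro a' b'
  have h1 : (MonoidAlgebra.single a b : MonoidAlgebra K G) = b • e a := by
    simp [he, MonoidAlgebra.smul_single]
  have h2 : (MonoidAlgebra.single a' b' : MonoidAlgebra K G) = b' • e a' := by
    simp [he, MonoidAlgebra.smul_single]
  rw [h1, h2]
  simp only [map_smul, LinearMap.smul_apply, LinearMap.zero_apply]
  exact congrArg (fun z => b' • b • z) (hBe a a')
end

section
/- Let G be an abelian group, λ: G → (K,+) a group morphism, and g₀ ∈ G. Define a bilinear product on KG by g ∙ h = λ(g)·δ_{h,g₀}·g·(1 − g₀) for g,h ∈ G (δ is the Kronecker delta). Then (KG, m, ∙, Δ) is a Com-PreLie bialgebra: ∙ satisfies the Leibniz identity, the right preLie identity, and Δ(a∙b) = a^{(1)}⊗(a^{(2)}∙b) + (a^{(1)}∙b^{(1)})⊗a^{(2)}b^{(2)}. -/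
open TensorProduct

set_option maxHeartbeats 1000000 in
set_option synthInstance.maxHeartbeats 400000 in
theorem stmt_15 (K : Type*) [Field K] [CharZero K] (G : Type*) [CommGroup G]
    [DecidableEq G]
    (lam : G → K) (hlam : ∀ g h : G, lam (g * h) = lam g + lam h) (g₀ : G)
    (B : MonoidAlgebra K G →ₗ[K] MonoidAlgebra K G →ₗ[K] MonoidAlgebra K G)
    (hB : ∀ g h : G, B (MonoidAlgebra.single g 1) (MonoidAlgebra.single h 1)
      = (if h = g₀ then lam g else 0) •
          (MonoidAlgebra.single g (1 : K)
            - MonoidAlgebra.single (g * g₀) (1 : K)))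
    (D : MonoidAlgebra K G →ₗ[K] MonoidAlgebra K G ⊗[K] MonoidAlgebra K G)
    (hD : ∀ g : G, D (MonoidAlgebra.single g 1)
      = MonoidAlgebra.single g (1 : K) ⊗ₜ[K] MonoidAlgebra.single g (1 : K)) :
    (∀ x y z : MonoidAlgebra K G, B (x * y) z = B x z * y + x * B y z)
    ∧ (∀ x y z : MonoidAlgebra K G,
        B (B x y) z - B x (B y z) = B (B x z) y - B x (B z y))
    ∧ (∀ x y : MonoidAlgebra K G,
        D (B x y)
          = (LinearMap.lTensor (MonoidAlgebra K G) (B.flip y)) (D x)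
            + (TensorProduct.map (TensorProduct.lift B)
                (LinearMap.mul' K (MonoidAlgebra K G)))
                ((TensorProduct.tensorTensorTensorComm K (MonoidAlgebra K G)
                    (MonoidAlgebra K G) (MonoidAlgebra K G) (MonoidAlgebra K G))
                  (D x ⊗ₜ[K] D y))) := by
  have hs : ∀ (a : G) (r : K), (MonoidAlgebra.single a r : MonoidAlgebra K G)
      = r • MonoidAlgebra.single a 1 := by
    intro a r; rw [MonoidAlgebra.smul_single', mul_one]
  have hl1 : lam 1 = 0 := by
    have := hlam 1 1; simpa using this.symm
  -- Part 1, base case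
  have base1 : ∀ a b c : G,
      B (MonoidAlgebra.single a 1 * MonoidAlgebra.single b 1) (MonoidAlgebra.single c 1)
        = B (MonoidAlgebra.single a 1) (MonoidAlgebra.single c 1) * MonoidAlgebra.single b 1
          + MonoidAlgebra.single a 1 * B (MonoidAlgebra.single b 1) (MonoidAlgebra.single c 1) := by
    intro a b c
    rw [MonoidAlgebra.single_mul_single, one_mul, hB, hB, hB]
    by_cases hc : c = g₀
    · have hcomm : a * g₀ * b = a * b * g₀ := by
        rw [mul_assoc, mul_comm g₀ b, ← mul_assoc]
      simp only [hc, eq_self_iff_true, if_true, hlam, smul_mul_assoc, mul_smul_comm, sub_mul, mul_sub,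
        MonoidAlgebra.single_mul_single, one_mul, mul_one, hcomm, add_smul, smul_sub,
        mul_assoc]
      module
    · simp [hc]
  -- Part 1
  have part1 : ∀ x y z : MonoidAlgebra K G, B (x * y) z = B x z * y + x * B y z := by
    intro x y z
    induction x using MonoidAlgebra.induction_linear with
    | zero => simp
    | add f g hf hg => simp only [add_mul, map_add, LinearMap.add_apply, hf, hg]; abel
    | single a r =>
    induction y using MonoidAlgebra.induction_linear with
    | zero => simp
    | add f g hf hg => simp only [mul_add, add_mul, map_add, LinearMap.add_apply, hf, hg]; abel
    | single b s =>
    induction z using MonoidAlgebra.induction_linear with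
    | zero => simp
    | add f g hf hg => simp only [mul_add, add_mul, map_add, LinearMap.add_apply, hf, hg]; abel
    | single c t =>
      rw [hs a r, hs b s, hs c t]
      simp only [smul_mul_assoc, mul_smul_comm, map_smul, LinearMap.smul_apply, base1 a b c]
      simp only [smul_add, mul_add, add_mul, smul_smul]
      ring_nf
  -- Part 2 closed formulas on singles
  have e1 : ∀ a b c : G,
      B (B (MonoidAlgebra.single a 1) (MonoidAlgebra.single b 1)) (MonoidAlgebra.single c 1)
        = ((if b = g₀ then lam a else 0) * (if c = g₀ then lam a else 0)) •
            (MonoidAlgebra.single a (1:K) - MonoidAlgebra.single (a * g₀) 1)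
          - ((if b = g₀ then lam a else 0) * (if c = g₀ then lam (a * g₀) else 0)) •
            (MonoidAlgebra.single (a * g₀) (1:K) - MonoidAlgebra.single (a * g₀ * g₀) 1) := by
    intro a b c
    rw [hB a b, map_smul, map_sub, LinearMap.smul_apply, LinearMap.sub_apply, hB a c,
      hB (a * g₀) c, smul_sub, smul_smul, smul_smul]
  have e2 : ∀ a b c : G,
      B (MonoidAlgebra.single a 1) (B (MonoidAlgebra.single b 1) (MonoidAlgebra.single c 1))
        = ((if c = g₀ then lam b else 0) * (if b = g₀ then lam a else 0)) •
            (MonoidAlgebra.single a (1:K) - MonoidAlgebra.single (a * g₀) 1)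
          - ((if c = g₀ then lam b else 0) * (if b * g₀ = g₀ then lam a else 0)) •
            (MonoidAlgebra.single a (1:K) - MonoidAlgebra.single (a * g₀) 1) := by
    intro a b c
    rw [hB b c, map_smul, map_sub, hB a b, hB a (b * g₀), smul_sub, smul_smul, smul_smul]
  -- Part 2 base case
  have base2 : ∀ a b c : G,
      B (B (MonoidAlgebra.single a 1) (MonoidAlgebra.single b 1)) (MonoidAlgebra.single c 1)
        - B (MonoidAlgebra.single a 1) (B (MonoidAlgebra.single b 1) (MonoidAlgebra.single c 1))
      = B (B (MonoidAlgebra.single a 1) (MonoidAlgebra.single c 1)) (MonoidAlgebra.single b 1)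
        - B (MonoidAlgebra.single a 1) (B (MonoidAlgebra.single c 1) (MonoidAlgebra.single b 1)) := by
    intro a b c
    rw [e1 a b c, e1 a c b, e2 a b c, e2 a c b]
    by_cases hb : b = g₀ <;> by_cases hc : c = g₀
    · rw [hb, hc]
    · by_cases hcc : c * g₀ = g₀
      · have hc1 : c = 1 := by rwa [mul_eq_right] at hcc
        have h1g : ¬(1:G) = g₀ := hc1 ▸ hc
        have hg1 : ¬g₀ = (1:G) := fun h => h1g h.symm
        simp [hb, hc, hcc, hc1, hl1, h1g, hg1]
      · simp [hb, hc, hcc]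
    · by_cases hbb : b * g₀ = g₀
      · have hb1 : b = 1 := by rwa [mul_eq_right] at hbb
        have h1g : ¬(1:G) = g₀ := hb1 ▸ hb
        have hg1 : ¬g₀ = (1:G) := fun h => h1g h.symm
        simp [hb, hc, hbb, hb1, hl1, h1g, hg1]
      · simp [hb, hc, hbb]
    · simp [hb, hc]
  -- Part 2
  have part2 : ∀ x y z : MonoidAlgebra K G,
      B (B x y) z - B x (B y z) = B (B x z) y - B x (B z y) := by
    intro x y z
    induction x using MonoidAlgebra.induction_linear with
    | zero => simp
    | add f g hf hg =>
      simp only [map_add, LinearMap.add_apply]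
      rw [add_sub_add_comm, hf, hg, add_sub_add_comm]
    | single a r =>
    induction y using MonoidAlgebra.induction_linear with
    | zero => simp
    | add f g hf hg =>
      simp only [map_add, LinearMap.add_apply]
      rw [add_sub_add_comm, hf, hg, add_sub_add_comm]
    | single b s =>
    induction z using MonoidAlgebra.induction_linear with
    | zero => simp
    | add f g hf hg =>
      simp only [map_add, LinearMap.add_apply]
      rw [add_sub_add_comm, hf, hg, add_sub_add_comm]
    | single c t =>
      rw [hs a r, hs b s, hs c t]
      have h := base2 a b c
      simp only [map_smul, LinearMap.smul_apply, smul_smul]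
      rw [show t * (s * r) = t * s * r by ring, show s * (t * r) = t * s * r by ring,
        show s * t * r = t * s * r by ring, ← smul_sub, ← smul_sub, h]
  -- Part 3 base case
  have base3 : ∀ a b : G,
      D (B (MonoidAlgebra.single a 1) (MonoidAlgebra.single b 1))
        = (LinearMap.lTensor (MonoidAlgebra K G) (B.flip (MonoidAlgebra.single b 1)))
            (D (MonoidAlgebra.single a 1))
          + (TensorProduct.map (TensorProduct.lift B)
              (LinearMap.mul' K (MonoidAlgebra K G)))
              ((TensorProduct.tensorTensorTensorComm K (MonoidAlgebra K G)
                  (MonoidAlgebra K G) (MonoidAlgebra K G) (MonoidAlgebra K G))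
                (D (MonoidAlgebra.single a 1) ⊗ₜ[K] D (MonoidAlgebra.single b 1))) := by
    intro a b
    rw [hB a b, hD a, hD b, map_smul, map_sub, hD a, hD (a * g₀)]
    rw [TensorProduct.tensorTensorTensorComm_tmul, TensorProduct.map_tmul,
      TensorProduct.lift.tmul, LinearMap.mul'_apply, LinearMap.lTensor_tmul,
      LinearMap.flip_apply, hB a b, MonoidAlgebra.single_mul_single, one_mul]
    by_cases hb : b = g₀
    · simp only [hb, eq_self_iff_true, if_true]
      simp only [smul_sub, TensorProduct.sub_tmul, TensorProduct.tmul_sub,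
        TensorProduct.smul_tmul', TensorProduct.tmul_smul]
      module
    · simp [hb]
  -- Part 3
  have part3 : ∀ x y : MonoidAlgebra K G,
      D (B x y)
        = (LinearMap.lTensor (MonoidAlgebra K G) (B.flip y)) (D x)
          + (TensorProduct.map (TensorProduct.lift B)
              (LinearMap.mul' K (MonoidAlgebra K G)))
              ((TensorProduct.tensorTensorTensorComm K (MonoidAlgebra K G)
                  (MonoidAlgebra K G) (MonoidAlgebra K G) (MonoidAlgebra K G))
                (D x ⊗ₜ[K] D y)) := by
    intro x y
    induction x using MonoidAlgebra.induction_linear with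
    | zero =>
      simp only [map_zero, LinearMap.zero_apply, TensorProduct.zero_tmul, add_zero]
    | add f g hf hg =>
      simp only [map_add, LinearMap.add_apply, TensorProduct.add_tmul, hf, hg]; abel
    | single a r =>
    induction y using MonoidAlgebra.induction_linear with
    | zero =>
      simp only [map_zero, LinearMap.zero_apply, TensorProduct.tmul_zero,
        LinearMap.lTensor_zero, LinearMap.flip_apply, add_zero, zero_add]
    | add f g hf hg =>
      simp only [map_add, LinearMap.add_apply, TensorProduct.tmul_add,
        LinearMap.lTensor_add, hf, hg]
      abel
    | single b s =>
      rw [hs a r, hs b s]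
      simp only [map_smul, LinearMap.smul_apply, TensorProduct.smul_tmul',
        TensorProduct.tmul_smul, LinearMap.lTensor_smul, smul_smul, smul_add, base3 a b]
      rw [mul_comm s r, ← TensorProduct.smul_tmul', map_smul, map_smul]
  exact ⟨part1, part2, part3⟩
end

section
/- Let (b_k)_{k≥1} be scalars in a field of characteristic zero satisfying b_{h+k}(b_k·h − b_h·k) = b_h·b_k·(h−k) for all h,k ≥ 1, with b_1 ≠ 0 and b_2 ≠ 0. Then for all n ≥ 1, (n−1)·b_1 − (n−2)·b_2 ≠ 0 and b_n = b_1·b_2 / ((n−1)·b_1 − (n−2)·b_2). -/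
theorem stmt_16 (K : Type*) [Field K] [CharZero K] (b : ℕ → K)
    (hrec : ∀ h k : ℕ, 1 ≤ h → 1 ≤ k →
      b (h + k) * (b k * (h : K) - b h * (k : K)) = b h * b k * ((h : K) - (k : K)))
    (h1 : b 1 ≠ 0) (h2 : b 2 ≠ 0) :
    ∀ n : ℕ, 1 ≤ n →
      ((n : K) - 1) * b 1 - ((n : K) - 2) * b 2 ≠ 0 ∧
      b n = b 1 * b 2 / (((n : K) - 1) * b 1 - ((n : K) - 2) * b 2) := by
  have key : ∀ m : ℕ,
      (((m + 2 : ℕ) : K) - 1) * b 1 - (((m + 2 : ℕ) : K) - 2) * b 2 ≠ 0 ∧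
      b (m + 2) = b 1 * b 2 / ((((m + 2 : ℕ) : K) - 1) * b 1 - (((m + 2 : ℕ) : K) - 2) * b 2) := by
    intro m
    induction m with
    | zero =>
      constructor
      · push_cast
        rw [show ((2:K) - 1) * b 1 - ((2:K) - 2) * b 2 = b 1 by ring]
        exact h1
      · push_cast
        rw [show ((2:K) - 1) * b 1 - ((2:K) - 2) * b 2 = b 1 by ring]
        rw [mul_comm (b 1) (b 2), mul_div_assoc, div_self h1, mul_one]
    | succ k ih =>
      obtain ⟨hd, hb⟩ := ih
      push_cast at hd hb ⊢
      set d : K := ((k:K) + 2 - 1) * b 1 - ((k:K) + 2 - 2) * b 2 with hdef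
      have hr := hrec (k + 2) 1 (by omega) (by omega)
      push_cast at hr
      rw [hb] at hr
      have hk1 : (k : K) + 1 ≠ 0 := by
        have : ((k + 1 : ℕ) : K) ≠ 0 := Nat.cast_ne_zero.mpr (by omega)
        push_cast at this; exact this
      have hmain : b (k + 2 + 1) * (((k:K) + 3 - 1) * b 1 - ((k:K) + 3 - 2) * b 2)
          = b 1 * b 2 := by
        have hr' : b (k + 2 + 1) * (((k:K) + 3 - 1) * b 1 - ((k:K) + 3 - 2) * b 2)
              * (((k:K) + 1) * b 1)
            = b 1 * b 2 * (((k:K) + 1) * b 1) := by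
          field_simp [hd] at hr
          rw [hdef] at hr
          linear_combination b 1 * hr
        exact mul_right_cancel₀ (mul_ne_zero hk1 h1) hr'
      have hd' : ((k:K) + 3 - 1) * b 1 - ((k:K) + 3 - 2) * b 2 ≠ 0 := by
        intro h0
        rw [h0, mul_zero] at hmain
        exact mul_ne_zero h1 h2 hmain.symm
      have hn : ((k:K) + 1 + 2 - 1) * b 1 - ((k:K) + 1 + 2 - 2) * b 2
          = ((k:K) + 3 - 1) * b 1 - ((k:K) + 3 - 2) * b 2 := by ring
      rw [hn]
      refine ⟨hd', ?_⟩
      rw [eq_div_iff hd']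
      show b (k + 2 + 1) * _ = _
      exact hmain
  intro n hn
  match n, hn with
  | 1, _ =>
    constructor
    · push_cast
      rw [show ((1:K) - 1) * b 1 - ((1:K) - 2) * b 2 = b 2 by ring]
      exact h2
    · push_cast
      rw [show ((1:K) - 1) * b 1 - ((1:K) - 2) * b 2 = b 2 by ring]
      rw [mul_div_assoc, div_self h2, mul_one]
  | (m + 2), _ => exact key m
end

section
/- Let λ, μ ∈ K and define a product on K[X] by X^k ∙ X^l = λ·k·l!·∑_{i=k}^{k+l−1} (μ^{k+l−i−1}/(i−k+1)!)·X^i for k,l ≥ 0, where the sum is empty when l = 0, so that X^k ∙ 1 = 0. Then ∙ satisfies the Leibniz identity (PQ)∙R = (P∙R)Q + P(Q∙R) and the right preLie identity. -/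
open Polynomial

private lemma theta_inj {K : Type*} [Field K] (mu : K) (p : K[X])
    (h : p = C mu * derivative p) : p = 0 := by
  by_contra hp
  have h2 : p.degree ≤ (derivative p).degree := by
    calc p.degree = (C mu * derivative p).degree := by rw [← h]
      _ ≤ (C mu).degree + (derivative p).degree := degree_mul_le _ _
      _ ≤ 0 + (derivative p).degree := add_le_add degree_C_le le_rfl
      _ = (derivative p).degree := zero_add _
  exact absurd h2 (not_le.2 (degree_derivative_lt hp))

private lemma const_of_deriv {K : Type*} [Field K] [CharZero K] (p : K[X])
    (h1 : derivative p = 0) (h2 : p.coeff 0 = 0) : p = 0 := by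
  have h3 := eq_C_of_derivative_eq_zero h1
  rw [h3, h2, map_zero]

set_option maxHeartbeats 1000000 in
theorem stmt_19 (K : Type*) [Field K] [CharZero K] (lam mu : K)
    (B : K[X] →ₗ[K] K[X] →ₗ[K] K[X])
    (hB : ∀ k l : ℕ, B (X ^ k) (X ^ l)
      = (lam * (k : K) * (l.factorial : K)) •
          ∑ i ∈ Finset.Ico k (k + l),
            (mu ^ (k + l - i - 1) / ((i - k + 1).factorial : K)) • (X ^ i : K[X])) :
    (∀ P Q R : K[X], B (P * Q) R = B P R * Q + P * B Q R)
    ∧ (∀ P Q R : K[X], B (B P Q) R - B P (B Q R) = B (B P R) Q - B P (B R Q)) := by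
  -- reindexed form of hB
  have hBr : ∀ k m : ℕ, B (X ^ k) (X ^ m)
      = (lam * (k : K) * (m.factorial : K)) •
          ∑ i ∈ Finset.range m,
            (mu ^ (m - i - 1) / ((i + 1).factorial : K)) • (X ^ (k + i) : K[X]) := by
    intro k m
    rw [hB k m, Finset.sum_Ico_eq_sum_range, Nat.add_sub_cancel_left]
    congr 1
    apply Finset.sum_congr rfl
    intro i hi
    have e1 : k + m - (k + i) - 1 = m - i - 1 := by omega
    have e2 : k + i - k + 1 = i + 1 := by omega
    rw [e1, e2]
  have rhoM : ∀ m : ℕ, B X (X ^ m)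
      = (lam * (m.factorial : K)) •
          ∑ i ∈ Finset.range m,
            (mu ^ (m - i - 1) / ((i + 1).factorial : K)) • (X ^ (i + 1) : K[X]) := by
    intro m
    have h := hBr 1 m
    rw [pow_one] at h
    rw [h]
    simp only [Nat.cast_one, mul_one]
    congr 1
    apply Finset.sum_congr rfl
    intro i hi
    rw [add_comm 1 i]
  have keyM : ∀ k m : ℕ, B (X ^ k) (X ^ m)
      = derivative (X ^ k : K[X]) * B X (X ^ m) := by
    intro k m
    cases k with
    | zero =>
      rw [hBr 0 m]
      simp
    | succ n =>
      rw [hBr (n+1) m, rhoM m, derivative_X_pow]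
      simp only [Nat.add_sub_cancel]
      rw [Finset.smul_sum, Finset.smul_sum, Finset.mul_sum]
      apply Finset.sum_congr rfl
      intro i hi
      have hx : (X : K[X]) ^ (n + 1 + i) = X ^ n * X ^ (i + 1) := by
        rw [← pow_add]
        congr 1
        omega
      rw [hx, smul_smul, mul_smul_comm, mul_smul_comm, smul_smul, ← smul_eq_C_mul,
        smul_mul_assoc, smul_smul]
      congr 1
      push_cast
      ring
  have keyXk : ∀ (k : ℕ) (Q : K[X]), B (X ^ k) Q = derivative (X ^ k : K[X]) * B X Q := by
    intro k Q
    induction Q using Polynomial.induction_on' with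
    | add p q hp hq => rw [map_add, map_add, hp, hq, mul_add]
    | monomial m b =>
      rw [← C_mul_X_pow_eq_monomial, ← smul_eq_C_mul, map_smul, map_smul, keyM, mul_smul_comm]
  have key : ∀ P Q : K[X], B P Q = derivative P * B X Q := by
    intro P Q
    induction P using Polynomial.induction_on' with
    | add p q hp hq =>
      rw [map_add, LinearMap.add_apply, hp, hq, derivative_add, add_mul]
    | monomial n a =>
      rw [← C_mul_X_pow_eq_monomial, ← smul_eq_C_mul, map_smul, LinearMap.smul_apply,
        keyXk, derivative_smul, smul_mul_assoc]
  have coeff0 : ∀ Q : K[X], (B X Q).coeff 0 = 0 := by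
    intro Q
    induction Q using Polynomial.induction_on' with
    | add p q hp hq => rw [map_add, coeff_add, hp, hq, add_zero]
    | monomial m b =>
      rw [← C_mul_X_pow_eq_monomial, ← smul_eq_C_mul, map_smul, coeff_smul, rhoM]
      simp [coeff_smul, finset_sum_coeff, coeff_X_pow]
  have D1 : ∀ m : ℕ, derivative (B X (X ^ m))
      = (lam * (m.factorial : K)) •
          ∑ i ∈ Finset.range m,
            (mu ^ (m - i - 1) / (i.factorial : K)) • (X ^ i : K[X]) := by
    intro m
    rw [rhoM m, derivative_smul, map_sum]
    congr 1
    apply Finset.sum_congr rfl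
    intro i hi
    rw [derivative_smul, derivative_X_pow, Nat.add_sub_cancel, ← smul_eq_C_mul, smul_smul]
    congr 1
    have h2 : ((i).factorial : K) ≠ 0 := Nat.cast_ne_zero.2 (Nat.factorial_pos _).ne'
    have h3 : ((i : K) + 1) ≠ 0 := by
      have := Nat.cast_ne_zero (R := K).2 (Nat.succ_ne_zero i)
      push_cast at this
      exact this
    rw [Nat.factorial_succ]
    push_cast
    field_simp
  have D2 : ∀ m : ℕ, C mu * derivative (derivative (B X (X ^ m)))
      = (lam * (m.factorial : K)) •
          ∑ i ∈ Finset.range m,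
            ((mu ^ (m - i) * i) / (i.factorial : K)) • (X ^ (i - 1) : K[X]) := by
    intro m
    rw [D1 m, derivative_smul, map_sum, mul_smul_comm, Finset.mul_sum]
    congr 1
    apply Finset.sum_congr rfl
    intro i hi
    rw [derivative_smul, derivative_X_pow, mul_smul_comm, ← smul_eq_C_mul, ← smul_eq_C_mul,
      smul_smul, smul_smul]
    congr 1
    have hi' : i < m := Finset.mem_range.1 hi
    have he : mu ^ (m - i) = mu * mu ^ (m - i - 1) := by
      rw [← pow_succ']
      congr 1
      omega
    rw [he]
    ring
  have thetaM : ∀ m : ℕ, derivative (B X (X ^ m))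
      = C lam * derivative (X ^ m : K[X]) + C mu * derivative (derivative (B X (X ^ m))) := by
    intro m
    cases m with
    | zero =>
      have h := D1 0
      simp only [Finset.range_zero, Finset.sum_empty, smul_zero, pow_zero] at h
      simp [h]
    | succ n =>
      rw [D2 (n+1), D1 (n+1), derivative_X_pow, Nat.add_sub_cancel]
      rw [Finset.sum_range_succ, Finset.sum_range_succ']
      have ht : (mu ^ (n + 1 - n - 1) / ((n).factorial : K)) • (X ^ n : K[X])
          = (1 / (n.factorial : K)) • X ^ n := by
        congr 2
        have : n + 1 - n - 1 = 0 := by omega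
        rw [this, pow_zero]
      have h0 : ((mu ^ (n + 1 - 0) * (0:ℕ)) / ((0:ℕ).factorial : K)) • (X ^ (0 - 1) : K[X]) = 0 := by
        simp
      rw [ht, h0, add_zero]
      have hsum : ∀ i ∈ Finset.range n,
          ((mu ^ (n + 1 - (i+1)) * ((i+1:ℕ))) / (((i+1:ℕ)).factorial : K)) • (X ^ ((i+1) - 1) : K[X])
          = (mu ^ (n + 1 - i - 1) / (i.factorial : K)) • (X ^ i : K[X]) := by
        intro i hi
        have hi' : i < n := Finset.mem_range.1 hi
        have e1 : n + 1 - (i + 1) = n + 1 - i - 1 := by omega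
        have e2 : (i + 1) - 1 = i := rfl
        rw [e1, e2]
        congr 1
        rw [Nat.factorial_succ]
        have h2 : ((i).factorial : K) ≠ 0 := Nat.cast_ne_zero.2 (Nat.factorial_pos _).ne'
        have h3 : ((i : K) + 1) ≠ 0 := by
          have := Nat.cast_ne_zero (R := K).2 (Nat.succ_ne_zero i)
          push_cast at this
          exact this
        push_cast
        field_simp
      rw [Finset.sum_congr rfl hsum, smul_add, add_comm]
      congr 1
      rw [smul_smul, ← smul_eq_C_mul, ← smul_eq_C_mul, smul_smul]
      congr 1
      rw [Nat.factorial_succ]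
      have h2 : ((n).factorial : K) ≠ 0 := Nat.cast_ne_zero.2 (Nat.factorial_pos _).ne'
      push_cast
      field_simp
  have thetaR : ∀ Q : K[X], derivative (B X Q)
      = C lam * derivative Q + C mu * derivative (derivative (B X Q)) := by
    intro Q
    induction Q using Polynomial.induction_on' with
    | add p q hp hq =>
      simp only [map_add, derivative_add]
      linear_combination hp + hq
    | monomial m b =>
      rw [← C_mul_X_pow_eq_monomial, ← smul_eq_C_mul, map_smul]
      simp only [smul_eq_C_mul, derivative_C_mul]
      linear_combination (C b : K[X]) * thetaM m
  constructor
  · intro P Q R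
    rw [key (P * Q) R, key P R, key Q R, derivative_mul]
    ring
  · intro P Q R
    have hd : derivative (B X Q) * B X R - B X (derivative Q * B X R)
        = derivative (B X R) * B X Q - B X (derivative R * B X Q) := by
      have hu := thetaR Q
      have hv := thetaR R
      have hw : derivative (B X (derivative Q * B X R))
          = C lam * (derivative (derivative Q) * B X R + derivative Q * derivative (B X R))
            + C mu * derivative (derivative (B X (derivative Q * B X R))) := by
        have h := thetaR (derivative Q * B X R)
        rw [derivative_mul] at h
        exact h
      have hw2 : derivative (B X (derivative R * B X Q))
          = C lam * (derivative (derivative R) * B X Q + derivative R * derivative (B X Q))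
            + C mu * derivative (derivative (B X (derivative R * B X Q))) := by
        have h := thetaR (derivative R * B X Q)
        rw [derivative_mul] at h
        exact h
      have hu2 : derivative (derivative (B X Q))
          = C lam * derivative (derivative Q)
            + C mu * derivative (derivative (derivative (B X Q))) := by
        have h := congrArg derivative hu
        rwa [derivative_add, derivative_C_mul, derivative_C_mul] at h
      have hv2 : derivative (derivative (B X R))
          = C lam * derivative (derivative R)
            + C mu * derivative (derivative (derivative (B X R))) := by
        have h := congrArg derivative hv
        rwa [derivative_add, derivative_C_mul, derivative_C_mul] at h
      have e0 : derivative (derivative (B X Q) * B X R - B X (derivative Q * B X R)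
            - (derivative (B X R) * B X Q - B X (derivative R * B X Q)))
          = C mu * derivative (derivative (derivative (B X Q) * B X R
              - B X (derivative Q * B X R)
              - (derivative (B X R) * B X Q - B X (derivative R * B X Q)))) := by
        simp only [derivative_sub, derivative_add, derivative_mul]
        linear_combination (B X R) * hu2 - (B X Q) * hv2 - hw + hw2
          + derivative (B X R) * hu - derivative (B X Q) * hv
      have e1 := theta_inj mu _ e0
      have e2 : (derivative (B X Q) * B X R - B X (derivative Q * B X R)
            - (derivative (B X R) * B X Q - B X (derivative R * B X Q))).coeff 0 = 0 := by
        simp [coeff_sub, Polynomial.mul_coeff_zero, coeff0]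
      have e3 := const_of_deriv _ e1 e2
      exact sub_eq_zero.1 e3
    rw [key (B P Q) R, key P (B Q R), key (B P R) Q, key P (B R Q),
      key P Q, key P R, key Q R, key R Q, derivative_mul, derivative_mul]
    linear_combination derivative P * hd
end
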